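/- arXiv:2012.10630 — 5 statements merged into one kernel-verified Lean document; each statement's English description precedes it below -/
import Mathlib

section
/- Let V be a finite ground set, and for each i in a finite index set I and each j in V let g_{ij} ≥ 0, and let C_i > 0. Then the set function G(S) = Σ_{i∈I} -log(1 + C_i · exp(-α Σ_{j∈S} g_{ij})) (for α > 0) is a monotone (non-decreasing) submodular function on subsets of V. -/
/-!
Each summand is `φ (∑ j ∈ S, g i j)` for `φ x = -log (1 + c * exp (-α * x))`, a nondecreasing
function with diminishing increments (it is concave). Composing such a function with a
nonnegative modular set function gives a monotone submodular one, and sums preserve both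
properties. The diminishing increments reduce, with `a = exp (-α * x)` and `t = exp (-α * d)`, to
`(1 + c t a) (1 + c b) ≤ (1 + c t b) (1 + c a)` for `b ≤ a`, i.e. to `c (1 - t) (a - b) ≥ 0`.
-/

open Finset Real

theorem log_one_add_mul_sub_log_one_add_mul_le {c t a b : ℝ} (hc : 0 ≤ c) (ht₀ : 0 ≤ t)
    (ht₁ : t ≤ 1) (hb : 0 ≤ b) (hba : b ≤ a) :
    log (1 + c * b) - log (1 + c * (t * b)) ≤ log (1 + c * a) - log (1 + c * (t * a)) := by
  have ha : 0 ≤ a := hb.trans hba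
  have hprod : (1 + c * (t * a)) * (1 + c * b) ≤ (1 + c * (t * b)) * (1 + c * a) := by
    nlinarith [mul_nonneg (mul_nonneg hc (sub_nonneg.mpr ht₁)) (sub_nonneg.mpr hba)]
  have hlog := log_le_log (by positivity) hprod
  rw [log_mul (by positivity) (by positivity), log_mul (by positivity) (by positivity)] at hlog
  linarith

noncomputable def logisticGain (c α x : ℝ) : ℝ :=
  -log (1 + c * exp (-α * x))

section logisticGain

variable {c α : ℝ}

theorem logisticGain_monotone (hc : 0 ≤ c) (hα : 0 ≤ α) : Monotone (logisticGain c α) := by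
  intro x y hxy
  have hexp : exp (-α * y) ≤ exp (-α * x) := exp_le_exp.mpr (by nlinarith)
  simp only [logisticGain, neg_le_neg_iff]
  gcongr

theorem logisticGain_add_sub_le {x y d : ℝ} (hc : 0 ≤ c) (hα : 0 ≤ α) (hxy : x ≤ y)
    (hd : 0 ≤ d) :
    logisticGain c α (y + d) - logisticGain c α y ≤
      logisticGain c α (x + d) - logisticGain c α x := by
  have hshift : ∀ z, exp (-α * (z + d)) = exp (-α * d) * exp (-α * z) := fun z => by
    rw [← exp_add]; ring_nf
  have ht₁ : exp (-α * d) ≤ 1 := exp_le_one_iff.mpr (by nlinarith)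
  have hyx : exp (-α * y) ≤ exp (-α * x) := exp_le_exp.mpr (by nlinarith)
  have := log_one_add_mul_sub_log_one_add_mul_le hc (exp_pos _).le ht₁ (exp_pos _).le hyx
  simp only [logisticGain, hshift]
  linarith

end logisticGain

section ConcaveOfModular

variable {V I : Type*} [Fintype I] {g : I → V → ℝ} {φ : I → ℝ → ℝ}

theorem sum_comp_sum_mono (hφ : ∀ i, Monotone (φ i)) (hg : ∀ i j, 0 ≤ g i j)
    {S T : Finset V} (hST : S ⊆ T) :
    ∑ i, φ i (∑ j ∈ S, g i j) ≤ ∑ i, φ i (∑ j ∈ T, g i j) :=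
  sum_le_sum fun i _ => hφ i (sum_le_sum_of_subset_of_nonneg hST fun j _ _ => hg i j)

theorem sum_comp_sum_insert_sub_le [DecidableEq V]
    (hφ : ∀ i x y d, x ≤ y → 0 ≤ d → φ i (y + d) - φ i y ≤ φ i (x + d) - φ i x)
    (hg : ∀ i j, 0 ≤ g i j) {S T : Finset V} {e : V} (hST : S ⊆ T) (heT : e ∉ T) :
    ∑ i, φ i (∑ j ∈ insert e T, g i j) - ∑ i, φ i (∑ j ∈ T, g i j) ≤
      ∑ i, φ i (∑ j ∈ insert e S, g i j) - ∑ i, φ i (∑ j ∈ S, g i j) := by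
  rw [← sum_sub_distrib, ← sum_sub_distrib]
  refine sum_le_sum fun i _ => ?_
  rw [sum_insert heT, sum_insert fun heS => heT (hST heS), add_comm (g i e), add_comm (g i e)]
  exact hφ i _ _ _ (sum_le_sum_of_subset_of_nonneg hST fun j _ _ => hg i j) (hg i e)

end ConcaveOfModular

theorem glister_logistic_monotone_submodular_general
    {V I : Type*} [DecidableEq V] [Fintype I]
    (g : I → V → ℝ) (hg : ∀ i j, 0 ≤ g i j)
    (C : I → ℝ) (hC : ∀ i, 0 < C i) (α : ℝ) (hα : 0 < α)
    (G : Finset V → ℝ)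
    (hG : ∀ S, G S = ∑ i, -Real.log (1 + C i * Real.exp (-α * ∑ j ∈ S, g i j))) :
    (∀ S T : Finset V, S ⊆ T → G S ≤ G T) ∧
    (∀ (S T : Finset V) (e : V), S ⊆ T → e ∉ T →
      G (insert e S) - G S ≥ G (insert e T) - G T) := by
  obtain rfl : G = fun S => ∑ i, logisticGain (C i) α (∑ j ∈ S, g i j) := funext hG
  exact ⟨fun S T hST => sum_comp_sum_mono (fun i => logisticGain_monotone (hC i).le hα.le) hg hST,
    fun S T e hST heT => sum_comp_sum_insert_sub_le
      (fun i _ _ _ hxy hd => logisticGain_add_sub_le (hC i).le hα.le hxy hd) hg hST heT⟩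

theorem glister_logistic_monotone_submodular
    {V I : Type*} [Fintype V] [DecidableEq V] [Fintype I]
    (g : I → V → ℝ) (hg : ∀ i j, 0 ≤ g i j)
    (C : I → ℝ) (hC : ∀ i, 0 < C i) (α : ℝ) (hα : 0 < α)
    (G : Finset V → ℝ)
    (hG : ∀ S, G S = ∑ i, -Real.log (1 + C i * Real.exp (-α * ∑ j ∈ S, g i j))) :
    (∀ S T : Finset V, S ⊆ T → G S ≤ G T) ∧
    (∀ (S T : Finset V) (e : V), S ⊆ T → e ∉ T →
      G (insert e S) - G S ≥ G (insert e T) - G T) :=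
  glister_logistic_monotone_submodular_general g hg C hC α hα G hG
end

section
/- For each i in a finite index set I and j in a finite ground set V, let ĝ_{ij} ≥ 0 and C_i ∈ ℝ. Then the set function G(S) = Σ_{i∈I} min(0, C_i + Σ_{j∈S} ĝ_{ij}) is monotone non-decreasing and submodular on 2^V. -/
/-! The map `x ↦ min 0 (C + x)` is monotone and concave, and `S ↦ ∑ j ∈ S, ĝ j` is modular and
monotone when `ĝ ≥ 0`. Composing gives a monotone set function whose increment from adding `e`
is an increment of a concave function over a step of fixed length `ĝ e`, taken further to the
right for larger sets, hence smaller. Summing over `i` preserves both properties. -/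

open Finset

theorem min_add_sub_min_le_of_le {a b c d : ℝ} (hab : a ≤ b) (hd : 0 ≤ d) :
    min c (d + b) - min c b ≤ min c (d + a) - min c a := by
  simp only [min_def]
  split_ifs <;> linarith

section TruncatedSum

variable {V : Type*} {w : V → ℝ} {S T : Finset V}

theorem min_add_sum_mono (c C : ℝ) (hw : ∀ j, 0 ≤ w j) (hST : S ⊆ T) :
    min c (C + ∑ j ∈ S, w j) ≤ min c (C + ∑ j ∈ T, w j) :=
  min_le_min_left c (add_le_add_right (sum_mono_set_of_nonneg hw hST) C)

theorem min_add_sum_insert_sub_antitone [DecidableEq V] (c C : ℝ) (hw : ∀ j, 0 ≤ w j)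
    (hST : S ⊆ T) {e : V} (heT : e ∉ T) :
    min c (C + ∑ j ∈ insert e T, w j) - min c (C + ∑ j ∈ T, w j) ≤
      min c (C + ∑ j ∈ insert e S, w j) - min c (C + ∑ j ∈ S, w j) := by
  have hsum : C + ∑ j ∈ S, w j ≤ C + ∑ j ∈ T, w j :=
    add_le_add_right (sum_mono_set_of_nonneg hw hST) C
  rw [sum_insert heT, sum_insert fun heS => heT (hST heS), add_left_comm C, add_left_comm C]
  exact min_add_sub_min_le_of_le hsum (hw e)

end TruncatedSum

theorem glister_hinge_monotone_submodular
    {V I : Type*} [DecidableEq V] [Fintype I]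
    (ghat : I → V → ℝ) (hg : ∀ i j, 0 ≤ ghat i j) (C : I → ℝ)
    (G : Finset V → ℝ)
    (hG : ∀ S, G S = ∑ i, min 0 (C i + ∑ j ∈ S, ghat i j)) :
    (∀ S T : Finset V, S ⊆ T → G S ≤ G T) ∧
    (∀ (S T : Finset V) (e : V), S ⊆ T → e ∉ T →
      G (insert e S) - G S ≥ G (insert e T) - G T) := by
  refine ⟨fun S T hST => ?_, fun S T e hST heT => ?_⟩
  · rw [hG, hG]
    exact sum_le_sum fun i _ => min_add_sum_mono 0 (C i) (hg i) hST
  · rw [hG, hG, hG, hG, ← sum_sub_distrib, ← sum_sub_distrib]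
    exact sum_le_sum fun i _ => min_add_sum_insert_sub_antitone 0 (C i) (hg i) hST heT
end

section
/- Let I be a finite index set, let C_{ik} > 0 for i∈I, k in a finite set K, let g'_{ijk} satisfy 1 ≤ g'_{ijk} ≤ 2R² + 1 for all i,j,k and some R > 0, and let α > 0. Define G2(S) = -Σ_{i∈I} log(Σ_{k∈K} C_{ik} exp(-α Σ_{j∈S} g'_{ijk})). Then for every element e and every set X, the marginal gain satisfies |I|·α·1 ≤ G2(e|X) ≤ |I|·α·(2R²+1); consequently G2 is β-submodular with β = 1/(2R²+1). -/
/-!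
Adding `e` to `X` multiplies the `k`-th term of the inner sum for `i` by `exp (-α g' i e k)`,
a factor lying in `[exp (-α (2R² + 1)), exp (-α)]`. So each inner sum shrinks by a factor in that
interval, each log term drops by between `α` and `α (2R² + 1)`, and the marginal gains all lie in
`[|I| α, |I| α (2R² + 1)]`; the ratio of the endpoints is the submodularity ratio.
-/

open Finset Real

def IsBetaSubmodular {V : Type*} [DecidableEq V] (β : ℝ) (f : Finset V → ℝ) : Prop :=
  ∀ (X Y : Finset V) (e : V), X ⊆ Y → e ∉ Y →
    f (insert e X) - f X ≥ β * (f (insert e Y) - f Y)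

theorem isBetaSubmodular_of_marginal_mem_Icc {V : Type*} [DecidableEq V] (f : Finset V → ℝ)
    {c a b : ℝ} (ha : 0 ≤ a) (hb : 0 < b)
    (hf : ∀ (X : Finset V) (e : V), e ∉ X → f (insert e X) - f X ∈ Set.Icc (c * a) (c * b)) :
    IsBetaSubmodular (a / b) f := by
  intro X Y e hXY heY
  have hX := (hf X e fun he => heY (hXY he)).1
  have hY := (hf Y e heY).2
  calc a / b * (f (insert e Y) - f Y) ≤ a / b * (c * b) := by gcongr
    _ = c * a := by field_simp
    _ ≤ f (insert e X) - f X := hX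

theorem log_sum_sub_log_sum_mul_exp_neg_mem_Icc {ι : Type*} {s : Finset ι} (hs : s.Nonempty)
    {w t : ι → ℝ} (hw : ∀ k ∈ s, 0 < w k) {a b : ℝ}
    (hta : ∀ k ∈ s, a ≤ t k) (htb : ∀ k ∈ s, t k ≤ b) :
    log (∑ k ∈ s, w k) - log (∑ k ∈ s, w k * exp (-t k)) ∈ Set.Icc a b := by
  have hW : 0 < ∑ k ∈ s, w k := sum_pos hw hs
  have hWt : 0 < ∑ k ∈ s, w k * exp (-t k) := sum_pos (fun k hk => by have := hw k hk; positivity) hs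
  have hupper : ∑ k ∈ s, w k * exp (-t k) ≤ exp (-a) * ∑ k ∈ s, w k := by
    rw [mul_sum]
    refine sum_le_sum fun k hk => ?_
    rw [mul_comm]
    gcongr
    · exact (hw k hk).le
    · exact hta k hk
  have hlower : exp (-b) * ∑ k ∈ s, w k ≤ ∑ k ∈ s, w k * exp (-t k) := by
    rw [mul_sum]
    refine sum_le_sum fun k hk => ?_
    rw [mul_comm]
    gcongr
    · exact (hw k hk).le
    · exact htb k hk
  have h₁ := log_le_log hWt hupper
  have h₂ := log_le_log (by positivity) hlower
  rw [log_mul (exp_ne_zero _) hW.ne', log_exp] at h₁ h₂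
  constructor <;> linarith

noncomputable def glisterCrossEntropy {V I K : Type*} [Fintype I] [Fintype K]
    (C : I → K → ℝ) (g' : I → V → K → ℝ) (α : ℝ) (S : Finset V) : ℝ :=
  -∑ i, log (∑ k, C i k * exp (-α * ∑ j ∈ S, g' i j k))

theorem glisterCrossEntropy_insert_sub {V I K : Type*} [DecidableEq V] [Fintype I] [Fintype K]
    (C : I → K → ℝ) (g' : I → V → K → ℝ) (α : ℝ) {X : Finset V} {e : V} (he : e ∉ X) :
    glisterCrossEntropy C g' α (insert e X) - glisterCrossEntropy C g' α X =
      ∑ i, (log (∑ k, C i k * exp (-α * ∑ j ∈ X, g' i j k)) -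
        log (∑ k, C i k * exp (-α * ∑ j ∈ X, g' i j k) * exp (-(α * g' i e k)))) := by
  have hexp : ∀ i k, exp (-α * ∑ j ∈ insert e X, g' i j k) =
      exp (-α * ∑ j ∈ X, g' i j k) * exp (-(α * g' i e k)) := fun i k => by
    rw [← exp_add, sum_insert he]
    ring_nf
  simp only [glisterCrossEntropy, hexp, ← mul_assoc, sum_sub_distrib]
  ring

theorem glisterCrossEntropy_marginal_mem_Icc {V I K : Type*} [DecidableEq V] [Fintype I]
    [Fintype K] [Nonempty K] {C : I → K → ℝ} (hC : ∀ i k, 0 < C i k) {g' : I → V → K → ℝ}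
    {lo hi : ℝ} (hlo : ∀ i j k, lo ≤ g' i j k) (hhi : ∀ i j k, g' i j k ≤ hi)
    {α : ℝ} (hα : 0 < α) {X : Finset V} {e : V} (he : e ∉ X) :
    glisterCrossEntropy C g' α (insert e X) - glisterCrossEntropy C g' α X ∈
      Set.Icc (Fintype.card I * α * lo) (Fintype.card I * α * hi) := by
  have hterm := fun i => log_sum_sub_log_sum_mul_exp_neg_mem_Icc univ_nonempty
    (fun k _ => mul_pos (hC i k) (exp_pos (-α * ∑ j ∈ X, g' i j k)))
    (a := α * lo) (b := α * hi) (t := fun k => α * g' i e k)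
    (fun k _ => by gcongr; exact hlo i e k) (fun k _ => by gcongr; exact hhi i e k)
  rw [glisterCrossEntropy_insert_sub C g' α he, mul_assoc, mul_assoc]
  constructor
  · simpa using card_nsmul_le_sum univ _ _ fun i _ => (hterm i).1
  · simpa using sum_le_card_nsmul univ _ _ fun i _ => (hterm i).2

theorem glister_cross_entropy_beta_submodular_general
    {V I K : Type*} [DecidableEq V] [Fintype I] [Fintype K] [Nonempty K]
    (C : I → K → ℝ) (hC : ∀ i k, 0 < C i k)
    (g' : I → V → K → ℝ) (R : ℝ)
    (hg1 : ∀ i j k, 1 ≤ g' i j k) (hg2 : ∀ i j k, g' i j k ≤ 2 * R ^ 2 + 1)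
    (α : ℝ) (hα : 0 < α)
    (G2 : Finset V → ℝ)
    (hG2 : ∀ S, G2 S =
      -∑ i, Real.log (∑ k, C i k * Real.exp (-α * ∑ j ∈ S, g' i j k))) :
    (∀ (X : Finset V) (e : V), e ∉ X →
      (Fintype.card I : ℝ) * α * 1 ≤ G2 (insert e X) - G2 X ∧
      G2 (insert e X) - G2 X ≤ (Fintype.card I : ℝ) * α * (2 * R ^ 2 + 1)) ∧
    (∀ (X Y : Finset V) (e : V), X ⊆ Y → e ∉ Y →
      G2 (insert e X) - G2 X ≥ (1 / (2 * R ^ 2 + 1)) * (G2 (insert e Y) - G2 Y)) := by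
  obtain rfl : G2 = glisterCrossEntropy C g' α := funext hG2
  have hmarginal := fun X e (he : e ∉ X) =>
    glisterCrossEntropy_marginal_mem_Icc hC hg1 hg2 hα he
  exact ⟨hmarginal, isBetaSubmodular_of_marginal_mem_Icc _ zero_le_one (by positivity) hmarginal⟩

theorem glister_cross_entropy_beta_submodular
    {V I K : Type*} [DecidableEq V] [Fintype I] [Fintype K] [Nonempty K]
    (C : I → K → ℝ) (hC : ∀ i k, 0 < C i k)
    (g' : I → V → K → ℝ) (R : ℝ) (hR : 0 < R)
    (hg1 : ∀ i j k, 1 ≤ g' i j k) (hg2 : ∀ i j k, g' i j k ≤ 2 * R ^ 2 + 1)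
    (α : ℝ) (hα : 0 < α)
    (G2 : Finset V → ℝ)
    (hG2 : ∀ S, G2 S =
      -∑ i, Real.log (∑ k, C i k * Real.exp (-α * ∑ j ∈ S, g' i j k))) :
    (∀ (X : Finset V) (e : V), e ∉ X →
      (Fintype.card I : ℝ) * α * 1 ≤ G2 (insert e X) - G2 X ∧
      G2 (insert e X) - G2 X ≤ (Fintype.card I : ℝ) * α * (2 * R ^ 2 + 1)) ∧
    (∀ (X Y : Finset V) (e : V), X ⊆ Y → e ∉ Y →
      G2 (insert e X) - G2 X ≥ (1 / (2 * R ^ 2 + 1)) * (G2 (insert e Y) - G2 Y)) :=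
  glister_cross_entropy_beta_submodular_general C hC g' R hg1 hg2 α hα G2 hG2
end

section
/- Let f be a β-submodular monotone set function on a finite ground set V (f(e|X) ≥ β f(e|Y) ≥ 0 for all X ⊆ Y, e ∉ Y) with f(∅) = 0. Then the greedy algorithm that iteratively adds the element with largest marginal gain, run for k steps, returns a set S_k with f(S_k) ≥ (1 - e^{-β})·max_{|S| ≤ k} f(S). -/
/-!
Write `d t = f S* - f (S t)` for the gap to a comparison set `S*` with `#S* ≤ k`. By monotonicity
and β-submodularity, `β d t ≤ β (f (S t ∪ S*) - f (S t))` is at most the sum of the `#S*` marginal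
gains of the elements of `S*` at `S t`, each of which the greedy gain dominates. Hence
`d (t + 1) ≤ (1 - β / k) d t ≤ exp (-β / k) d t` while the gap is nonnegative, and after `k` steps
`d k ≤ exp (-β) f S*`.
-/

open Finset Real

theorem le_exp_neg_mul_of_sub_succ_ge {d : ℕ → ℝ} {c : ℝ} (h0 : 0 ≤ d 0)
    (hanti : ∀ t, d (t + 1) ≤ d t) (hrate : ∀ t, c * d t ≤ d t - d (t + 1)) (t : ℕ) :
    d t ≤ exp (-(c * t)) * d 0 := by
  induction t with
  | zero => simp
  | succ t ih =>
    have hexp : exp (-(c * ↑(t + 1))) = exp (-c) * exp (-(c * t)) := by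
      rw [← exp_add]; push_cast; ring_nf
    rcases lt_or_ge (d t) 0 with hneg | hnonneg
    · have : 0 ≤ exp (-(c * ↑(t + 1))) * d 0 := by positivity
      linarith [hanti t]
    · calc d (t + 1) ≤ (1 - c) * d t := by linarith [hrate t]
        _ ≤ exp (-c) * d t := by
          gcongr
          linarith [add_one_le_exp (-c)]
        _ ≤ exp (-c) * (exp (-(c * t)) * d 0) := by gcongr
        _ = exp (-(c * ↑(t + 1))) * d 0 := by rw [hexp, mul_assoc]

section SetFunction

variable {V : Type*} [DecidableEq V] {f : Finset V → ℝ}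

theorem le_union_of_marginal_nonneg
    (hmono : ∀ (X : Finset V) (e : V), e ∉ X → 0 ≤ f (insert e X) - f X) (B T : Finset V) :
    f B ≤ f (B ∪ T) := by
  induction T using Finset.induction_on with
  | empty => simp
  | @insert a T _ ih =>
    rw [union_insert]
    by_cases h : a ∈ B ∪ T
    · rwa [insert_eq_self.mpr h]
    · linarith [hmono (B ∪ T) a h]

theorem mul_sub_le_sum_marginal {β : ℝ}
    (hbeta : ∀ (X Y : Finset V) (e : V), X ⊆ Y → e ∉ Y →
      f (insert e X) - f X ≥ β * (f (insert e Y) - f Y))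
    (B T : Finset V) :
    β * (f (B ∪ T) - f B) ≤ ∑ a ∈ T, (f (insert a B) - f B) := by
  induction T using Finset.induction_on with
  | empty => simp
  | @insert a T ha ih =>
    rw [sum_insert ha, union_insert]
    by_cases h : a ∈ B ∪ T
    · have haB : a ∈ B := (mem_union.mp h).resolve_right ha
      rw [insert_eq_self.mpr h, insert_eq_self.mpr haB]
      linarith
    · linarith [hbeta B (B ∪ T) a subset_union_left h]

theorem mul_sub_le_card_mul_of_marginal_le {β g : ℝ} (hβ : 0 ≤ β)
    (hmono : ∀ (X : Finset V) (e : V), e ∉ X → 0 ≤ f (insert e X) - f X)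
    (hbeta : ∀ (X Y : Finset V) (e : V), X ⊆ Y → e ∉ Y →
      f (insert e X) - f X ≥ β * (f (insert e Y) - f Y))
    {B : Finset V} (hg : ∀ a, f (insert a B) - f B ≤ g) (T : Finset V) :
    β * (f T - f B) ≤ #T * g := by
  have hunion : f T ≤ f (B ∪ T) := union_comm T B ▸ le_union_of_marginal_nonneg hmono T B
  calc β * (f T - f B) ≤ β * (f (B ∪ T) - f B) := by gcongr
    _ ≤ ∑ a ∈ T, (f (insert a B) - f B) := mul_sub_le_sum_marginal hbeta B T
    _ ≤ #T * g := by simpa using sum_le_card_nsmul T _ g fun a _ => hg a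

end SetFunction

theorem greedy_beta_submodular_guarantee_general
    {V : Type*} [DecidableEq V]
    (f : Finset V → ℝ) (β : ℝ) (hβ0 : 0 < β)
    (hempty : f ∅ = 0)
    (hmono : ∀ (X : Finset V) (e : V), e ∉ X → 0 ≤ f (insert e X) - f X)
    (hbeta : ∀ (X Y : Finset V) (e : V), X ⊆ Y → e ∉ Y →
      f (insert e X) - f X ≥ β * (f (insert e Y) - f Y))
    (S : ℕ → Finset V) (e : ℕ → V)
    (hS0 : S 0 = ∅)
    (hSstep : ∀ t, S (t + 1) = insert (e t) (S t))
    (hgreedy : ∀ t (x : V), f (insert x (S t)) - f (S t) ≤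
      f (insert (e t) (S t)) - f (S t))
    (k : ℕ) (Sstar : Finset V) (hcard : Sstar.card ≤ k) :
    f (S k) ≥ (1 - Real.exp (-β)) * f Sstar := by
  obtain rfl | hk := Nat.eq_zero_or_pos k
  · simp [card_eq_zero.mp (Nat.le_zero.mp hcard), hS0, hempty]
  have hk : (0 : ℝ) < k := by exact_mod_cast hk
  have hstar : 0 ≤ f Sstar := by simpa [hempty] using le_union_of_marginal_nonneg hmono ∅ Sstar
  have hgain (t : ℕ) : 0 ≤ f (S (t + 1)) - f (S t) := by
    rw [hSstep]
    by_cases h : e t ∈ S t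
    · simp [insert_eq_self.mpr h]
    · exact hmono _ _ h
  have hrate (t : ℕ) : β * (f Sstar - f (S t)) ≤ k * (f (S (t + 1)) - f (S t)) := by
    calc β * (f Sstar - f (S t)) ≤ #Sstar * (f (S (t + 1)) - f (S t)) :=
          mul_sub_le_card_mul_of_marginal_le hβ0.le hmono hbeta (by simpa [hSstep] using hgreedy t)
            Sstar
      _ ≤ k * (f (S (t + 1)) - f (S t)) := by gcongr; exact hgain t
  have hdecay := le_exp_neg_mul_of_sub_succ_ge (d := fun t => f Sstar - f (S t)) (c := β / k)
    (by simpa [hS0, hempty] using hstar) (fun t => by linarith [hgain t])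
    (fun t => by rw [div_mul_eq_mul_div, div_le_iff₀ hk]; linarith [hrate t]) k
  simp only [div_mul_cancel₀ β hk.ne', hS0, hempty, sub_zero] at hdecay
  linarith

theorem greedy_beta_submodular_guarantee
    {V : Type*} [Fintype V] [DecidableEq V] [Nonempty V]
    (f : Finset V → ℝ) (β : ℝ) (hβ0 : 0 < β) (hβ1 : β ≤ 1)
    (hempty : f ∅ = 0)
    (hmono : ∀ (X : Finset V) (e : V), e ∉ X → 0 ≤ f (insert e X) - f X)
    (hbeta : ∀ (X Y : Finset V) (e : V), X ⊆ Y → e ∉ Y →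
      f (insert e X) - f X ≥ β * (f (insert e Y) - f Y))
    (S : ℕ → Finset V) (e : ℕ → V)
    (hS0 : S 0 = ∅)
    (hSstep : ∀ t, S (t + 1) = insert (e t) (S t))
    (hgreedy : ∀ t (x : V), f (insert x (S t)) - f (S t) ≤
      f (insert (e t) (S t)) - f (S t))
    (k : ℕ) (Sstar : Finset V) (hcard : Sstar.card ≤ k) :
    f (S k) ≥ (1 - Real.exp (-β)) * f Sstar :=
  greedy_beta_submodular_guarantee_general f β hβ0 hempty hmono hbeta S e hS0 hSstep hgreedy k Sstar
    hcard
end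

section
/- Let f: 2^V → ℝ be monotone submodular with f(∅) = 0 on a finite ground set V. For the greedy iterates S_0 = ∅, S_{t+1} = S_t ∪ {argmax_e f(e|S_t)}, and any set S* with |S*| ≤ k, the per-step recursion f(S_{t+1}) - f(S_t) ≥ (1/k)(f(S*) - f(S_t)) holds, and consequently f(S_k) ≥ (1 - (1 - 1/k)^k) f(S*) ≥ (1 - 1/e) f(S*). -/
/-!
Submodularity bounds the gain of adding all of `S*` to the current greedy set `S t` by the sum of
the `|S*| ≤ k` single-element gains, each at most the greedy gain; monotonicity makes that total
gain at least `f S* - f (S t)`. Hence the gap `f S* - f (S t)` shrinks by a factor `1 - 1/k` per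
step, and `(1 - 1/k)^k ≤ e⁻¹`.
-/

open Finset Real

def marginalGain {V : Type*} [DecidableEq V] (f : Finset V → ℝ) (S : Finset V) (e : V) : ℝ :=
  f (insert e S) - f S

section Submodular

variable {V : Type*} [DecidableEq V] {f : Finset V → ℝ}

lemma sub_le_sum_marginalGain
    (hsub : ∀ (X Y : Finset V) (e : V), X ⊆ Y → e ∉ Y →
      f (insert e X) - f X ≥ f (insert e Y) - f Y)
    (A B : Finset V) :
    f (A ∪ B) - f A ≤ ∑ x ∈ B, marginalGain f A x := by
  induction B using Finset.induction_on with
  | empty => simp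
  | @insert b B hb ih =>
    rw [union_insert, sum_insert hb]
    by_cases hbA : b ∈ A
    · rw [insert_eq_of_mem (mem_union_left B hbA), marginalGain, insert_eq_of_mem hbA]
      linarith
    · have hbAB : b ∉ A ∪ B := by simp [hbA, hb]
      have := hsub A (A ∪ B) b subset_union_left hbAB
      rw [marginalGain]
      linarith

lemma sub_le_mul_of_marginalGain_le
    (hmono : ∀ S T : Finset V, S ⊆ T → f S ≤ f T)
    (hsub : ∀ (X Y : Finset V) (e : V), X ⊆ Y → e ∉ Y →
      f (insert e X) - f X ≥ f (insert e Y) - f Y)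
    {A B : Finset V} {g : ℝ} {k : ℕ} (hg : 0 ≤ g) (hgain : ∀ x, marginalGain f A x ≤ g)
    (hcard : B.card ≤ k) :
    f B - f A ≤ k * g :=
  calc f B - f A ≤ f (A ∪ B) - f A := by linarith [hmono _ _ (subset_union_right : B ⊆ A ∪ B)]
    _ ≤ ∑ x ∈ B, marginalGain f A x := sub_le_sum_marginalGain hsub A B
    _ ≤ ∑ _x ∈ B, g := sum_le_sum fun x _ => hgain x
    _ = B.card * g := by rw [sum_const, nsmul_eq_mul]
    _ ≤ k * g := by gcongr

end Submodular

lemma sub_le_pow_mul_of_forall_mul_sub_le {a : ℕ → ℝ} {b c : ℝ} (ha0 : a 0 = 0) (hc : 0 ≤ 1 - c)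
    (hstep : ∀ t, c * (b - a t) ≤ a (t + 1) - a t) (t : ℕ) :
    b - a t ≤ (1 - c) ^ t * b := by
  induction t with
  | zero => simp [ha0]
  | succ t ih =>
    calc b - a (t + 1) ≤ (1 - c) * (b - a t) := by linarith [hstep t]
      _ ≤ (1 - c) * ((1 - c) ^ t * b) := by gcongr
      _ = (1 - c) ^ (t + 1) * b := by ring

theorem greedy_classical_guarantee_general
    {V : Type*} [DecidableEq V]
    (f : Finset V → ℝ)
    (hempty : f ∅ = 0)
    (hmono : ∀ S T : Finset V, S ⊆ T → f S ≤ f T)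
    (hsub : ∀ (X Y : Finset V) (e : V), X ⊆ Y → e ∉ Y →
      f (insert e X) - f X ≥ f (insert e Y) - f Y)
    (S : ℕ → Finset V) (e : ℕ → V)
    (hS0 : S 0 = ∅)
    (hSstep : ∀ t, S (t + 1) = insert (e t) (S t))
    (hgreedy : ∀ t (x : V), f (insert x (S t)) - f (S t) ≤
      f (insert (e t) (S t)) - f (S t))
    (k : ℕ) (hk : 0 < k) (Sstar : Finset V) (hcard : Sstar.card ≤ k) :
    (∀ t, f (S (t + 1)) - f (S t) ≥ (1 / (k : ℝ)) * (f Sstar - f (S t))) ∧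
    f (S k) ≥ (1 - (1 - 1 / (k : ℝ)) ^ k) * f Sstar ∧
    f (S k) ≥ (1 - 1 / Real.exp 1) * f Sstar := by
  have step : ∀ t, f (S (t + 1)) - f (S t) ≥ (1 / (k : ℝ)) * (f Sstar - f (S t)) := by
    intro t
    rw [hSstep t, one_div_mul_eq_div]
    have hgain : 0 ≤ f (insert (e t) (S t)) - f (S t) :=
      sub_nonneg.2 (hmono _ _ (subset_insert (e t) (S t)))
    refine div_le_of_le_mul₀ k.cast_nonneg hgain ?_
    rw [mul_comm]
    exact sub_le_mul_of_marginalGain_le hmono hsub hgain (hgreedy t) hcard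
  have hfSstar : 0 ≤ f Sstar := hempty ▸ hmono ∅ Sstar (empty_subset _)
  have ratio : f (S k) ≥ (1 - (1 - 1 / (k : ℝ)) ^ k) * f Sstar := by
    have hgap := sub_le_pow_mul_of_forall_mul_sub_le (a := fun t => f (S t)) (hS0 ▸ hempty)
      (Nat.one_sub_one_div_cast_nonneg k) step k
    linarith
  have hexp : (1 - 1 / (k : ℝ)) ^ k ≤ 1 / Real.exp 1 := by
    rw [one_div (Real.exp 1), ← Real.exp_neg]
    exact one_sub_div_pow_le_exp_neg (by exact_mod_cast hk)
  refine ⟨step, ratio, ratio.trans' ?_⟩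
  gcongr

theorem greedy_classical_guarantee
    {V : Type*} [Fintype V] [DecidableEq V] [Nonempty V]
    (f : Finset V → ℝ)
    (hempty : f ∅ = 0)
    (hmono : ∀ S T : Finset V, S ⊆ T → f S ≤ f T)
    (hsub : ∀ (X Y : Finset V) (e : V), X ⊆ Y → e ∉ Y →
      f (insert e X) - f X ≥ f (insert e Y) - f Y)
    (S : ℕ → Finset V) (e : ℕ → V)
    (hS0 : S 0 = ∅)
    (hSstep : ∀ t, S (t + 1) = insert (e t) (S t))
    (hgreedy : ∀ t (x : V), f (insert x (S t)) - f (S t) ≤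
      f (insert (e t) (S t)) - f (S t))
    (k : ℕ) (hk : 0 < k) (Sstar : Finset V) (hcard : Sstar.card ≤ k) :
    (∀ t, f (S (t + 1)) - f (S t) ≥ (1 / (k : ℝ)) * (f Sstar - f (S t))) ∧
    f (S k) ≥ (1 - (1 - 1 / (k : ℝ)) ^ k) * f Sstar ∧
    f (S k) ≥ (1 - 1 / Real.exp 1) * f Sstar :=
  greedy_classical_guarantee_general f hempty hmono hsub S e hS0 hSstep hgreedy k hk Sstar hcard
end
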